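/- arXiv:1602.06455 — 7 statements merged into one kernel-verified Lean document; each statement's English description precedes it below -/
import Mathlib

section
/- Let γ : ℝ → ℝⁿ be a smooth curve with |γ'(t)| = 1 for all t, let u : ℝ → ℝⁿ be a smooth vector field along γ, and let ℓ ∈ ℝ. For ε ∈ ℝ define γ_ε = γ + εu and Γ_ε(t) = γ_ε(t) + ℓ·γ_ε'(t)/|γ_ε'(t)|. Then for each t, the derivative of ε ↦ Γ_ε(t) at ε = 0 equals u(t) + ℓ(u'(t) − (γ'(t)·u'(t))γ'(t)). -/
open scoped RealInnerProductSpace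

/-- The differential of the map `γ ↦ γ + ℓ γ'/|γ'|` (rear track to front
track) applied to a variation field `u` is `u + ℓ (u' − (γ'·u')γ')`. -/
theorem bicycle_variation_formula {n : ℕ}
    (γ u : ℝ → EuclideanSpace ℝ (Fin n))
    (hγ : ContDiff ℝ (⊤ : ℕ∞) γ) (hu : ContDiff ℝ (⊤ : ℕ∞) u)
    (harc : ∀ t, ‖deriv γ t‖ = 1) (ℓ : ℝ) (t : ℝ) :
    deriv (fun ε : ℝ =>
        (γ t + ε • u t) +
          ℓ • (‖deriv (fun s => γ s + ε • u s) t‖⁻¹ •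
            deriv (fun s => γ s + ε • u s) t)) 0
      = u t + ℓ • (deriv u t - ⟪deriv γ t, deriv u t⟫ • deriv γ t) := by
  have hγd := hγ.differentiable (by simp)
  have hud := hu.differentiable (by simp)
  set a := deriv γ t with ha
  set b := deriv u t with hb
  have hna : ‖a‖ = 1 := harc t
  have h1 : ⟪a, a⟫ = 1 := by
    rw [real_inner_self_eq_norm_sq, hna]; norm_num
  have hg : ∀ ε : ℝ, deriv (fun s => γ s + ε • u s) t = a + ε • b := by
    intro ε
    rw [deriv_fun_add (hγd t) (g := fun s => ε • u s) ((hud t).const_smul ε), deriv_fun_const_smul ε (hud t)]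
  have hgd : HasDerivAt (fun ε : ℝ => a + ε • b) b 0 := by
    simpa using ((hasDerivAt_id (0 : ℝ)).smul_const b).const_add a
  have hq : HasDerivAt (fun ε : ℝ => ⟪a + ε • b, a + ε • b⟫) (2 * ⟪a, b⟫) 0 := by
    have h := hgd.inner ℝ hgd
    simp only [zero_smul, add_zero] at h
    rw [real_inner_comm a b] at h
    rw [two_mul]
    exact h
  have hq0 : ⟪a + (0 : ℝ) • b, a + (0 : ℝ) • b⟫ = 1 := by simpa using h1
  have hN : HasDerivAt (fun ε : ℝ => Real.sqrt ⟪a + ε • b, a + ε • b⟫) ⟪a, b⟫ 0 := by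
    have hs := (Real.hasDerivAt_sqrt (x := ⟪a + (0 : ℝ) • b, a + (0 : ℝ) • b⟫)
      (by rw [hq0]; norm_num)).comp 0 hq
    have : (1 / (2 * Real.sqrt ⟪a + (0 : ℝ) • b, a + (0 : ℝ) • b⟫)) * (2 * ⟪a, b⟫)
        = ⟪a, b⟫ := by
      rw [hq0, Real.sqrt_one]; ring
    rw [this] at hs
    exact hs
  have hinv : HasDerivAt (fun ε : ℝ => (Real.sqrt ⟪a + ε • b, a + ε • b⟫)⁻¹)
      (-⟪a, b⟫) 0 := by
    have h := hN.inv (by rw [hq0]; norm_num)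
    rw [hq0, Real.sqrt_one] at h
    simpa [Pi.inv_def] using h
  have hsm : HasDerivAt
      (fun ε : ℝ => (Real.sqrt ⟪a + ε • b, a + ε • b⟫)⁻¹ • (a + ε • b))
      (b - ⟪a, b⟫ • a) 0 := by
    have := hinv.smul hgd
    simp only [hq0, zero_smul, add_zero] at this
    exact this.congr_deriv (by rw [h1, Real.sqrt_one]; module)
  have hF : HasDerivAt
      (fun ε : ℝ => (γ t + ε • u t) +
        ℓ • ((Real.sqrt ⟪a + ε • b, a + ε • b⟫)⁻¹ • (a + ε • b)))
      (u t + ℓ • (b - ⟪a, b⟫ • a)) 0 := by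
    have h1' : HasDerivAt (fun ε : ℝ => γ t + ε • u t) (u t) 0 := by
      simpa using ((hasDerivAt_id (0 : ℝ)).smul_const (u t)).const_add (γ t)
    exact h1'.add (hsm.const_smul ℓ)
  have heq : (fun ε : ℝ =>
        (γ t + ε • u t) +
          ℓ • (‖deriv (fun s => γ s + ε • u s) t‖⁻¹ •
            deriv (fun s => γ s + ε • u s) t))
      = fun ε : ℝ => (γ t + ε • u t) +
        ℓ • ((Real.sqrt ⟪a + ε • b, a + ε • b⟫)⁻¹ • (a + ε • b)) := by
    funext ε
    rw [hg ε, real_inner_self_eq_norm_sq, Real.sqrt_sq (norm_nonneg _)]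
  rw [heq]
  exact hF.deriv
end

section
/- Let γ : ℝ → ℝⁿ be a smooth L-periodic curve with |γ'(t)| = 1 for all t, let ℓ > 0, and set Γ₊ = γ + ℓγ' and Γ₋ = γ − ℓγ'. For smooth L-periodic vector fields u, v : ℝ → ℝⁿ, set U₊ = u + ℓ(u' − (γ'·u')γ'), U₋ = u − ℓ(u' − (γ'·u')γ'), and similarly V₊, V₋. Then ∫₀ᴸ U₊'(t)·V₊(t) dt = ∫₀ᴸ U₋'(t)·V₋(t) dt. (The bicycle correspondence preserves the 2-form ω(u,v) = ∫ u'·v dt.) -/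
open scoped RealInnerProductSpace ContDiff

private lemma periodic_deriv' {E : Type*} [NormedAddCommGroup E] [NormedSpace ℝ E]
    {f : ℝ → E} {L : ℝ} (hf : Function.Periodic f L) :
    Function.Periodic (deriv f) L := by
  intro t
  have h : (fun s => f (s + L)) = f := funext hf
  rw [← deriv_comp_add_const f L t, h]

/-- The bicycle correspondence preserves the 2-form
`ω(u,v) = ∫ u'·v dt`. -/
theorem bicycle_preserves_omega {n : ℕ} (L ℓ : ℝ) (hL : 0 < L) (hℓ : 0 < ℓ)
    (γ u v : ℝ → EuclideanSpace ℝ (Fin n))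
    (hγ : ContDiff ℝ (⊤ : ℕ∞) γ) (hγper : Function.Periodic γ L)
    (harc : ∀ t, ‖deriv γ t‖ = 1)
    (hu : ContDiff ℝ (⊤ : ℕ∞) u) (huper : Function.Periodic u L)
    (hv : ContDiff ℝ (⊤ : ℕ∞) v) (hvper : Function.Periodic v L)
    (Up Um Vp Vm : ℝ → EuclideanSpace ℝ (Fin n))
    (hUp : Up = fun t => u t + ℓ • (deriv u t - ⟪deriv γ t, deriv u t⟫ • deriv γ t))
    (hUm : Um = fun t => u t - ℓ • (deriv u t - ⟪deriv γ t, deriv u t⟫ • deriv γ t))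
    (hVp : Vp = fun t => v t + ℓ • (deriv v t - ⟪deriv γ t, deriv v t⟫ • deriv γ t))
    (hVm : Vm = fun t => v t - ℓ • (deriv v t - ⟪deriv γ t, deriv v t⟫ • deriv γ t)) :
    ∫ t in (0:ℝ)..L, ⟪deriv Up t, Vp t⟫ = ∫ t in (0:ℝ)..L, ⟪deriv Um t, Vm t⟫ := by
  have h1le : (1 : WithTop ℕ∞) ≤ ∞ := by norm_num
  obtain ⟨hγdiff, hγ'⟩ := contDiff_infty_iff_deriv.mp (hγ.of_le (by simp))
  obtain ⟨hudiff, hu'⟩ := contDiff_infty_iff_deriv.mp (hu.of_le (by simp))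
  obtain ⟨hvdiff, hv'⟩ := contDiff_infty_iff_deriv.mp (hv.of_le (by simp))
  set w : ℝ → EuclideanSpace ℝ (Fin n) :=
    fun t => ℓ • (deriv u t - ⟪deriv γ t, deriv u t⟫ • deriv γ t) with hwdef
  set z : ℝ → EuclideanSpace ℝ (Fin n) :=
    fun t => ℓ • (deriv v t - ⟪deriv γ t, deriv v t⟫ • deriv γ t) with hzdef
  have hwC : ContDiff ℝ ∞ w :=
    (hu'.sub ((hγ'.inner ℝ hu').smul hγ')).const_smul ℓ
  have hzC : ContDiff ℝ ∞ z :=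
    (hv'.sub ((hγ'.inner ℝ hv').smul hγ')).const_smul ℓ
  have hwd : Differentiable ℝ w := hwC.differentiable (by simp)
  have hzd : Differentiable ℝ z := hzC.differentiable (by simp)
  have hUp' : Up = fun t => u t + w t := hUp
  have hUm' : Um = fun t => u t - w t := hUm
  have hVp' : Vp = fun t => v t + z t := hVp
  have hVm' : Vm = fun t => v t - z t := hVm
  have hUpd : ∀ t, deriv Up t = deriv u t + deriv w t := by
    intro t; rw [hUp']; exact deriv_add (hudiff t) (hwd t)
  have hUmd : ∀ t, deriv Um t = deriv u t - deriv w t := by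
    intro t; rw [hUm']; exact deriv_sub (hudiff t) (hwd t)
  -- periodicity of w
  have hγ'per : Function.Periodic (deriv γ) L := periodic_deriv' hγper
  have hu'per : Function.Periodic (deriv u) L := periodic_deriv' huper
  have hwper : Function.Periodic w L := by
    intro t; simp only [hwdef, hγ'per t, hu'per t]
  -- key pointwise symmetry: ⟪u', z⟫ = ⟪w, v'⟫
  have hsym : ∀ t, ⟪deriv u t, z t⟫ = ⟪w t, deriv v t⟫ := by
    intro t
    simp only [hwdef, hzdef, inner_smul_left, inner_smul_right, inner_sub_left,
      inner_sub_right, real_inner_comm (deriv γ t) (deriv u t),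
      real_inner_comm (deriv γ t) (deriv v t), RCLike.ofReal_real_eq_id, id, starRingEnd_apply, star_trivial]
    ring
  -- F = 2⟪w, v⟫ and its derivative
  set F : ℝ → ℝ := fun t => 2 * ⟪w t, v t⟫ with hFdef
  have hFd : ∀ t, deriv F t = 2 * (⟪w t, deriv v t⟫ + ⟪deriv w t, v t⟫) := by
    intro t
    rw [hFdef]
    rw [deriv_const_mul 2 (((hwd t).inner ℝ (hvdiff t)))]
    rw [deriv_inner_apply (𝕜 := ℝ) (hwd t) (hvdiff t)]
  have hFdiff : Differentiable ℝ F :=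
    Differentiable.const_mul (Differentiable.inner ℝ hwd hvdiff) 2
  -- pointwise identity for the integrand difference
  have key : ∀ t, ⟪deriv Up t, Vp t⟫ - ⟪deriv Um t, Vm t⟫ = deriv F t := by
    intro t
    rw [hFd t, hUpd t, hUmd t, hVp', hVm']
    simp only [inner_add_left, inner_add_right, inner_sub_left, inner_sub_right]
    have := hsym t
    ring_nf
    linarith [this]
  -- continuity / integrability
  have hUpC : ContDiff ℝ ∞ Up := by rw [hUp']; exact (hu.of_le (by simp)).add hwC
  have hUmC : ContDiff ℝ ∞ Um := by rw [hUm']; exact (hu.of_le (by simp)).sub hwC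
  have hVpC : ContDiff ℝ ∞ Vp := by rw [hVp']; exact (hv.of_le (by simp)).add hzC
  have hVmC : ContDiff ℝ ∞ Vm := by rw [hVm']; exact (hv.of_le (by simp)).sub hzC
  have hUp'cont : Continuous (deriv Up) := (contDiff_infty_iff_deriv.mp hUpC).2.continuous
  have hUm'cont : Continuous (deriv Um) := (contDiff_infty_iff_deriv.mp hUmC).2.continuous
  have hint1 : IntervalIntegrable (fun t => ⟪deriv Up t, Vp t⟫) MeasureTheory.volume 0 L :=
    (hUp'cont.inner hVpC.continuous).intervalIntegrable 0 L
  have hint2 : IntervalIntegrable (fun t => ⟪deriv Um t, Vm t⟫) MeasureTheory.volume 0 L :=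
    (hUm'cont.inner hVmC.continuous).intervalIntegrable 0 L
  have hFderivCont : Continuous (deriv F) := by
    have : deriv F = fun t => 2 * (⟪w t, deriv v t⟫ + ⟪deriv w t, v t⟫) := funext hFd
    rw [this]
    have hw'cont : Continuous (deriv w) := (contDiff_infty_iff_deriv.mp hwC).2.continuous
    exact continuous_const.mul ((hwC.continuous.inner hv'.continuous).add
      (hw'cont.inner hv.continuous))
  have hintF : IntervalIntegrable (deriv F) MeasureTheory.volume 0 L :=
    hFderivCont.intervalIntegrable 0 L
  rw [← sub_eq_zero, ← intervalIntegral.integral_sub hint1 hint2]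
  have heq : ∫ t in (0:ℝ)..L, (⟪deriv Up t, Vp t⟫ - ⟪deriv Um t, Vm t⟫)
      = ∫ t in (0:ℝ)..L, deriv F t :=
    intervalIntegral.integral_congr (fun t _ => key t)
  rw [heq, intervalIntegral.integral_deriv_eq_sub (fun t _ => (hFdiff t)) hintF]
  have hwL : w L = w 0 := by have := hwper 0; rwa [zero_add] at this
  have hvL : v L = v 0 := by have := hvper 0; rwa [zero_add] at this
  simp [hFdef, hwL, hvL]
end

section
/- Let γ : ℝ → ℝ³ be a smooth L-periodic curve with |γ'(t)| = 1 for all t, let ℓ > 0, and set Γ₊ = γ + ℓγ', Γ₋ = γ − ℓγ'. For smooth L-periodic vector fields u, v : ℝ → ℝ³, set U± = u ± ℓ(u' − (γ'·u')γ') and V± = v ± ℓ(v' − (γ'·v')γ'). Then ∫₀ᴸ det(Γ₊'(t), U₊(t), V₊(t)) dt = ∫₀ᴸ det(Γ₋'(t), U₋(t), V₋(t)) dt. (The bicycle correspondence in dimension three preserves the Marsden–Weinstein form Ω(u,v) = ∫ det(Γ', u, v) dt.) -/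
open scoped RealInnerProductSpace

/-- Determinant of three vectors of `ℝ³` (as columns). -/
noncomputable def det3 (a b c : EuclideanSpace ℝ (Fin 3)) : ℝ :=
  a 0 * (b 1 * c 2 - b 2 * c 1) - a 1 * (b 0 * c 2 - b 2 * c 0) +
    a 2 * (b 0 * c 1 - b 1 * c 0)

/-- If three vectors of `ℝ³` are orthogonal to a unit vector, their determinant vanishes. -/
lemma cubic_vanish (T0 T1 T2 S0 S1 S2 p0 p1 p2 q0 q1 q2 : ℝ)
    (hn : T0 * T0 + T1 * T1 + T2 * T2 = 1)
    (ho : T0 * S0 + T1 * S1 + T2 * S2 = 0)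
    (hp : T0 * p0 + T1 * p1 + T2 * p2 = 0)
    (hq : T0 * q0 + T1 * q1 + T2 * q2 = 0) :
    S0 * (p1 * q2 - p2 * q1) - S1 * (p0 * q2 - p2 * q0) + S2 * (p0 * q1 - p1 * q0) = 0 := by
  linear_combination
    (-(S0 * (p1 * q2 - p2 * q1) - S1 * (p0 * q2 - p2 * q0) + S2 * (p0 * q1 - p1 * q0))) * hn
    + (T0 * (p1 * q2 - p2 * q1) - T1 * (p0 * q2 - p2 * q0) + T2 * (p0 * q1 - p1 * q0)) * ho
    - (T0 * (S1 * q2 - S2 * q1) - T1 * (S0 * q2 - S2 * q0) + T2 * (S0 * q1 - S1 * q0)) * hp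
    + (T0 * (S1 * p2 - S2 * p1) - T1 * (S0 * p2 - S2 * p0) + T2 * (S0 * p1 - S1 * p0)) * hq

/-- The bicycle correspondence in dimension three preserves the
Marsden–Weinstein form `Ω(u,v) = ∫ det(Γ', u, v) dt`. -/
theorem bicycle_preserves_MarsdenWeinstein (L ℓ : ℝ) (hL : 0 < L) (hℓ : 0 < ℓ)
    (γ u v : ℝ → EuclideanSpace ℝ (Fin 3))
    (hγ : ContDiff ℝ (⊤ : ℕ∞) γ) (hγper : Function.Periodic γ L)
    (harc : ∀ t, ‖deriv γ t‖ = 1)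
    (hu : ContDiff ℝ (⊤ : ℕ∞) u) (huper : Function.Periodic u L)
    (hv : ContDiff ℝ (⊤ : ℕ∞) v) (hvper : Function.Periodic v L)
    (Γp Γm Up Um Vp Vm : ℝ → EuclideanSpace ℝ (Fin 3))
    (hΓp : Γp = fun t => γ t + ℓ • deriv γ t)
    (hΓm : Γm = fun t => γ t - ℓ • deriv γ t)
    (hUp : Up = fun t => u t + ℓ • (deriv u t - ⟪deriv γ t, deriv u t⟫ • deriv γ t))
    (hUm : Um = fun t => u t - ℓ • (deriv u t - ⟪deriv γ t, deriv u t⟫ • deriv γ t))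
    (hVp : Vp = fun t => v t + ℓ • (deriv v t - ⟪deriv γ t, deriv v t⟫ • deriv γ t))
    (hVm : Vm = fun t => v t - ℓ • (deriv v t - ⟪deriv γ t, deriv v t⟫ • deriv γ t)) :
    ∫ t in (0:ℝ)..L, det3 (deriv Γp t) (Up t) (Vp t)
      = ∫ t in (0:ℝ)..L, det3 (deriv Γm t) (Um t) (Vm t) := by
  -- smoothness bookkeeping
  have hγi : ContDiff ℝ (⊤ : ℕ∞) γ := hγ.of_le (by simp)
  have hT : ContDiff ℝ (⊤ : ℕ∞) (deriv γ) := (contDiff_infty_iff_deriv.mp hγi).2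
  have hS : ContDiff ℝ (⊤ : ℕ∞) (deriv (deriv γ)) := (contDiff_infty_iff_deriv.mp hT).2
  have hui : ContDiff ℝ (⊤ : ℕ∞) u := hu.of_le (by simp)
  have huD : ContDiff ℝ (⊤ : ℕ∞) (deriv u) := (contDiff_infty_iff_deriv.mp hui).2
  have hvi : ContDiff ℝ (⊤ : ℕ∞) v := hv.of_le (by simp)
  have hvD : ContDiff ℝ (⊤ : ℕ∞) (deriv v) := (contDiff_infty_iff_deriv.mp hvi).2
  have hγd : Differentiable ℝ γ := hγi.differentiable (by norm_num)
  have hTd : Differentiable ℝ (deriv γ) := hT.differentiable (by norm_num)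
  have hud : Differentiable ℝ u := hui.differentiable (by norm_num)
  have hvd : Differentiable ℝ v := hvi.differentiable (by norm_num)
  -- coordinate helpers
  have hco : ∀ (f : ℝ → EuclideanSpace ℝ (Fin 3)) (f' : EuclideanSpace ℝ (Fin 3)) (t : ℝ)
      (i : Fin 3), HasDerivAt f f' t → HasDerivAt (fun s => f s i) (f' i) t :=
    fun f f' t i h => (EuclideanSpace.proj (𝕜 := ℝ) i).hasFDerivAt.comp_hasDerivAt t h
  have hcc : ∀ {A : ℝ → EuclideanSpace ℝ (Fin 3)}, Continuous A → ∀ (i : Fin 3),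
      Continuous fun t => A t i :=
    fun {A} hA i => (EuclideanSpace.proj (𝕜 := ℝ) i).continuous.comp hA
  have cdet : ∀ {A B C : ℝ → EuclideanSpace ℝ (Fin 3)}, Continuous A → Continuous B →
      Continuous C → Continuous fun t => det3 (A t) (B t) (C t) := by
    intro A B C hA hB hC
    simp only [det3]
    exact (((hcc hA 0).mul (((hcc hB 1).mul (hcc hC 2)).sub ((hcc hB 2).mul (hcc hC 1)))).sub
      ((hcc hA 1).mul (((hcc hB 0).mul (hcc hC 2)).sub ((hcc hB 2).mul (hcc hC 0))))).add
      ((hcc hA 2).mul (((hcc hB 0).mul (hcc hC 1)).sub ((hcc hB 1).mul (hcc hC 0))))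
  -- inner product in coordinates
  have hinner : ∀ x y : EuclideanSpace ℝ (Fin 3),
      ⟪x, y⟫ = x 0 * y 0 + x 1 * y 1 + x 2 * y 2 := by
    intro x y; simp [PiLp.inner_apply, Fin.sum_univ_three]; ring
  -- unit tangent and orthogonality of the curvature vector
  have hunit : ∀ t, ⟪deriv γ t, deriv γ t⟫ = 1 := by
    intro t; rw [real_inner_self_eq_norm_sq, harc t, one_pow]
  have horth : ∀ t, ⟪deriv γ t, deriv (deriv γ) t⟫ = 0 := by
    intro t
    have h1 : HasDerivAt (fun s => ⟪deriv γ s, deriv γ s⟫)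
        (⟪deriv γ t, deriv (deriv γ) t⟫ + ⟪deriv (deriv γ) t, deriv γ t⟫) t :=
      HasDerivAt.inner ℝ (hTd t).hasDerivAt (hTd t).hasDerivAt
    have h2 : (fun s => ⟪deriv γ s, deriv γ s⟫) = fun _ => (1 : ℝ) := funext fun s => hunit s
    rw [h2] at h1
    have h4 := h1.unique (hasDerivAt_const t (1 : ℝ))
    have h5 : ⟪deriv (deriv γ) t, deriv γ t⟫ = ⟪deriv γ t, deriv (deriv γ) t⟫ :=
      real_inner_comm _ _
    linarith
  -- derivatives of the front tracks
  have hΓp' : ∀ t, deriv Γp t = deriv γ t + ℓ • deriv (deriv γ) t := by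
    intro t
    rw [hΓp]
    exact (((hγd t).hasDerivAt).add (((hTd t).hasDerivAt).const_smul ℓ)).deriv
  have hΓm' : ∀ t, deriv Γm t = deriv γ t - ℓ • deriv (deriv γ) t := by
    intro t
    rw [hΓm]
    exact (((hγd t).hasDerivAt).sub (((hTd t).hasDerivAt).const_smul ℓ)).deriv
  -- the function F whose derivative is G
  have hFd : ∀ t : ℝ, HasDerivAt (fun s => det3 (deriv γ s) (u s) (v s))
      (det3 (deriv (deriv γ) t) (u t) (v t) + det3 (deriv γ t) (deriv u t) (v t)
        + det3 (deriv γ t) (u t) (deriv v t)) t := by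
    intro t
    have hT0 := hco _ _ t 0 (hTd t).hasDerivAt
    have hT1 := hco _ _ t 1 (hTd t).hasDerivAt
    have hT2 := hco _ _ t 2 (hTd t).hasDerivAt
    have hu0 := hco _ _ t 0 (hud t).hasDerivAt
    have hu1 := hco _ _ t 1 (hud t).hasDerivAt
    have hu2 := hco _ _ t 2 (hud t).hasDerivAt
    have hv0 := hco _ _ t 0 (hvd t).hasDerivAt
    have hv1 := hco _ _ t 1 (hvd t).hasDerivAt
    have hv2 := hco _ _ t 2 (hvd t).hasDerivAt
    have big := ((hT0.mul ((hu1.mul hv2).sub (hu2.mul hv1))).sub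
      (hT1.mul ((hu0.mul hv2).sub (hu2.mul hv0)))).add
      (hT2.mul ((hu0.mul hv1).sub (hu1.mul hv0)))
    simp only [det3]
    convert big using 1
    · rfl
    · rfl
    · rfl
    · simp only [Pi.mul_apply, Pi.sub_apply]; ring
  -- periodicity of deriv γ and of F
  have hTper : Function.Periodic (deriv γ) L := by
    intro t
    have h : deriv (fun s => γ (s + L)) t = deriv γ (t + L) := by
      simpa using deriv_comp_add_const γ L t
    rw [← h]
    congr 1
    funext s
    exact hγper s
  have hF0 : det3 (deriv γ L) (u L) (v L) = det3 (deriv γ 0) (u 0) (v 0) := by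
    rw [show (L : ℝ) = 0 + L from (zero_add L).symm, hTper 0, huper 0, hvper 0]
  -- continuity of G and the fundamental theorem of calculus
  have hGcont : Continuous fun t => det3 (deriv (deriv γ) t) (u t) (v t)
      + det3 (deriv γ t) (deriv u t) (v t) + det3 (deriv γ t) (u t) (deriv v t) :=
    ((cdet hS.continuous hui.continuous hvi.continuous).add
      (cdet hT.continuous huD.continuous hvi.continuous)).add
      (cdet hT.continuous hui.continuous hvD.continuous)
  have hintG : ∫ t in (0:ℝ)..L, (det3 (deriv (deriv γ) t) (u t) (v t)
      + det3 (deriv γ t) (deriv u t) (v t) + det3 (deriv γ t) (u t) (deriv v t))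
      = det3 (deriv γ L) (u L) (v L) - det3 (deriv γ 0) (u 0) (v 0) :=
    intervalIntegral.integral_eq_sub_of_hasDerivAt (fun t _ => hFd t)
      (hGcont.intervalIntegrable 0 L)
  -- the pointwise key identity
  have key : ∀ t, det3 (deriv Γp t) (Up t) (Vp t) - det3 (deriv Γm t) (Um t) (Vm t)
      = (2 * ℓ) * (det3 (deriv (deriv γ) t) (u t) (v t)
        + det3 (deriv γ t) (deriv u t) (v t) + det3 (deriv γ t) (u t) (deriv v t)) := by
    intro t
    have hn := hunit t
    have ho := horth t
    have ha := hinner (deriv γ t) (deriv u t)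
    have hb := hinner (deriv γ t) (deriv v t)
    rw [hinner] at hn ho
    have hp : deriv γ t 0 * (deriv u t 0 - ⟪deriv γ t, deriv u t⟫ * deriv γ t 0)
        + deriv γ t 1 * (deriv u t 1 - ⟪deriv γ t, deriv u t⟫ * deriv γ t 1)
        + deriv γ t 2 * (deriv u t 2 - ⟪deriv γ t, deriv u t⟫ * deriv γ t 2) = 0 := by
      linear_combination (-1 : ℝ) * ha + (-⟪deriv γ t, deriv u t⟫) * hn
    have hq : deriv γ t 0 * (deriv v t 0 - ⟪deriv γ t, deriv v t⟫ * deriv γ t 0)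
        + deriv γ t 1 * (deriv v t 1 - ⟪deriv γ t, deriv v t⟫ * deriv γ t 1)
        + deriv γ t 2 * (deriv v t 2 - ⟪deriv γ t, deriv v t⟫ * deriv γ t 2) = 0 := by
      linear_combination (-1 : ℝ) * hb + (-⟪deriv γ t, deriv v t⟫) * hn
    have hc := cubic_vanish (deriv γ t 0) (deriv γ t 1) (deriv γ t 2)
      (deriv (deriv γ) t 0) (deriv (deriv γ) t 1) (deriv (deriv γ) t 2)
      (deriv u t 0 - ⟪deriv γ t, deriv u t⟫ * deriv γ t 0)
      (deriv u t 1 - ⟪deriv γ t, deriv u t⟫ * deriv γ t 1)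
      (deriv u t 2 - ⟪deriv γ t, deriv u t⟫ * deriv γ t 2)
      (deriv v t 0 - ⟪deriv γ t, deriv v t⟫ * deriv γ t 0)
      (deriv v t 1 - ⟪deriv γ t, deriv v t⟫ * deriv γ t 1)
      (deriv v t 2 - ⟪deriv γ t, deriv v t⟫ * deriv γ t 2)
      hn ho hp hq
    rw [hΓp' t, hΓm' t, hUp, hUm, hVp, hVm]
    simp only [det3, PiLp.add_apply, PiLp.sub_apply, PiLp.smul_apply, smul_eq_mul]
    linear_combination (2 * ℓ ^ 3) * hc
  -- integrability of both integrands
  have hΓpc : Continuous (deriv Γp) := by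
    have : deriv Γp = fun t => deriv γ t + ℓ • deriv (deriv γ) t := funext hΓp'
    rw [this]
    exact hT.continuous.add (hS.continuous.const_smul ℓ)
  have hΓmc : Continuous (deriv Γm) := by
    have : deriv Γm = fun t => deriv γ t - ℓ • deriv (deriv γ) t := funext hΓm'
    rw [this]
    exact hT.continuous.sub (hS.continuous.const_smul ℓ)
  have hUVc : ∀ (w : ℝ → EuclideanSpace ℝ (Fin 3)), ContDiff ℝ (⊤ : ℕ∞) w →
      ContDiff ℝ (⊤ : ℕ∞) (deriv w) →
      Continuous fun t => ℓ • (deriv w t - ⟪deriv γ t, deriv w t⟫ • deriv γ t) := by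
    intro w hw hwD
    exact ((hwD.continuous.sub ((hT.continuous.inner (𝕜 := ℝ) hwD.continuous).smul
      hT.continuous)).const_smul ℓ)
  have hUpc : Continuous Up := by
    rw [hUp]; exact hui.continuous.add (hUVc u hui huD)
  have hUmc : Continuous Um := by
    rw [hUm]; exact hui.continuous.sub (hUVc u hui huD)
  have hVpc : Continuous Vp := by
    rw [hVp]; exact hvi.continuous.add (hUVc v hvi hvD)
  have hVmc : Continuous Vm := by
    rw [hVm]; exact hvi.continuous.sub (hUVc v hvi hvD)
  have ip : IntervalIntegrable (fun t => det3 (deriv Γp t) (Up t) (Vp t))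
      MeasureTheory.volume 0 L := (cdet hΓpc hUpc hVpc).intervalIntegrable 0 L
  have im : IntervalIntegrable (fun t => det3 (deriv Γm t) (Um t) (Vm t))
      MeasureTheory.volume 0 L := (cdet hΓmc hUmc hVmc).intervalIntegrable 0 L
  -- put everything together
  have hsub := intervalIntegral.integral_sub ip im
  have hzero : ∫ t in (0:ℝ)..L,
      (det3 (deriv Γp t) (Up t) (Vp t) - det3 (deriv Γm t) (Um t) (Vm t)) = 0 := by
    calc ∫ t in (0:ℝ)..L,
          (det3 (deriv Γp t) (Up t) (Vp t) - det3 (deriv Γm t) (Um t) (Vm t))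
        = ∫ t in (0:ℝ)..L, (2 * ℓ) * (det3 (deriv (deriv γ) t) (u t) (v t)
            + det3 (deriv γ t) (deriv u t) (v t) + det3 (deriv γ t) (u t) (deriv v t)) := by
          apply intervalIntegral.integral_congr
          intro t _
          exact key t
      _ = (2 * ℓ) * ∫ t in (0:ℝ)..L, (det3 (deriv (deriv γ) t) (u t) (v t)
            + det3 (deriv γ t) (deriv u t) (v t) + det3 (deriv γ t) (u t) (deriv v t)) :=
          intervalIntegral.integral_const_mul _ _
      _ = 0 := by rw [hintG, hF0]; ring
  linarith [hsub, hzero]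
end

section
/- Let Γ : ℝ → ℝ³ be a smooth L-periodic curve with Γ'(t) ≠ 0 for all t, and let u : ℝ → ℝ³ be a smooth L-periodic map. If ∫₀ᴸ det(Γ'(t), u(t), v(t)) dt = 0 for every smooth L-periodic map v : ℝ → ℝ³, then for every t the vector u(t) is a scalar multiple of Γ'(t). (The kernel of the 2-form Ω(u,v) = ∫ det(Γ', u, v) dt consists of the tangent vector fields.) -/
open scoped RealInnerProductSpace

/-- Cross product of two vectors of `ℝ³`. -/
noncomputable def crossV (a b : EuclideanSpace ℝ (Fin 3)) : EuclideanSpace ℝ (Fin 3) :=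
  (WithLp.equiv 2 (Fin 3 → ℝ)).symm
    ![a 1 * b 2 - a 2 * b 1, a 2 * b 0 - a 0 * b 2, a 0 * b 1 - a 1 * b 0]

lemma crossV_apply (a b : EuclideanSpace ℝ (Fin 3)) (i : Fin 3) :
    crossV a b i = ![a 1 * b 2 - a 2 * b 1, a 2 * b 0 - a 0 * b 2, a 0 * b 1 - a 1 * b 0] i := rfl

lemma zero_of_periodic_nonneg_integral_zero {f : ℝ → ℝ} (hf : Continuous f)
    (L : ℝ) (hL : 0 < L) (hper : Function.Periodic f L)
    (hnn : ∀ t, 0 ≤ f t) (hint : ∫ t in (0:ℝ)..L, f t = 0) (t : ℝ) : f t = 0 := by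
  have hii : ∀ a b : ℝ, IntervalIntegrable f MeasureTheory.volume a b :=
    fun a b => hf.intervalIntegrable a b
  have h1 : ∫ s in (t - L)..(t - L + L), f s = 0 := by
    rw [hper.intervalIntegral_add_eq (t - L) 0]; simpa using hint
  have h2 : ∫ s in t..(t + L), f s = 0 := by
    rw [hper.intervalIntegral_add_eq t 0]; simpa using hint
  have hTL : t - L + L = t := by ring
  set F : ℝ → ℝ := fun x => ∫ s in (t - L)..x, f s with hF
  have hFmono : ∀ x y, x ≤ y → F x ≤ F y := by
    intro x y hxy
    have : F y - F x = ∫ s in x..y, f s := by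
      rw [hF]
      simp only
      rw [← intervalIntegral.integral_add_adjacent_intervals (hii _ x) (hii x y)]
      ring
    have hnn' : 0 ≤ ∫ s in x..y, f s :=
      intervalIntegral.integral_nonneg hxy (fun s _ => hnn s)
    linarith
  have hFt : F t = 0 := by rw [hF]; simpa [hTL] using h1
  have hFtop : F (t + L) = 0 := by
    have : F (t + L) = F t + ∫ s in t..(t + L), f s := by
      rw [hF]
      simp only
      rw [← intervalIntegral.integral_add_adjacent_intervals (hii _ t) (hii t (t + L))]
    rw [this, hFt, h2]; ring
  have hFbot : F (t - L) = 0 := by simp [hF]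
  -- F is zero on a neighborhood of t
  have hzero : ∀ x, t - L ≤ x → x ≤ t + L → F x = 0 := by
    intro x h1x h2x
    have := hFmono _ _ h1x
    have := hFmono _ _ h2x
    rw [hFbot] at *
    rw [hFtop] at *
    linarith
  have hev : F =ᶠ[nhds t] (fun _ => (0:ℝ)) := by
    have : Set.Ioo (t - L) (t + L) ∈ nhds t := by
      apply Ioo_mem_nhds <;> linarith
    filter_upwards [this] with x hx
    exact hzero x hx.1.le hx.2.le
  have hd0 : HasDerivAt F 0 t := by
    have : HasDerivAt (fun _ => (0:ℝ)) 0 t := hasDerivAt_const _ _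
    exact this.congr_of_eventuallyEq hev
  have hdft : HasDerivAt F (f t) t :=
    intervalIntegral.integral_hasDerivAt_right (hii _ t)
      hf.aestronglyMeasurable.stronglyMeasurableAtFilter hf.continuousAt
  exact (hdft.unique hd0)

lemma cross_zero_parallel (a0 a1 a2 b0 b1 b2 : ℝ)
    (e1 : a1 * b2 - a2 * b1 = 0) (e2 : a2 * b0 - a0 * b2 = 0) (e3 : a0 * b1 - a1 * b0 = 0)
    (h : a0 ≠ 0 ∨ a1 ≠ 0 ∨ a2 ≠ 0) :
    ∃ c : ℝ, b0 = c * a0 ∧ b1 = c * a1 ∧ b2 = c * a2 := by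
  rcases h with h | h | h
  · exact ⟨b0 / a0, by field_simp, by field_simp; nlinarith, by field_simp; nlinarith⟩
  · exact ⟨b1 / a1, by field_simp; nlinarith, by field_simp, by field_simp; nlinarith⟩
  · exact ⟨b2 / a2, by field_simp; nlinarith, by field_simp; nlinarith, by field_simp⟩

/-- The kernel of the 2-form `Ω(u,v) = ∫ det(Γ',u,v) dt` consists of
the tangent vector fields along the curve. -/
theorem Omega_kernel_tangent (L : ℝ) (hL : 0 < L)
    (Γ u : ℝ → EuclideanSpace ℝ (Fin 3))
    (hΓ : ContDiff ℝ (⊤ : ℕ∞) Γ) (hΓper : Function.Periodic Γ L)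
    (hreg : ∀ t, deriv Γ t ≠ 0)
    (hu : ContDiff ℝ (⊤ : ℕ∞) u) (huper : Function.Periodic u L)
    (hker : ∀ v : ℝ → EuclideanSpace ℝ (Fin 3), ContDiff ℝ (⊤ : ℕ∞) v →
      Function.Periodic v L → ∫ t in (0:ℝ)..L, det3 (deriv Γ t) (u t) (v t) = 0) :
    ∀ t, ∃ c : ℝ, u t = c • deriv Γ t := by
  have hΓ' : ContDiff ℝ (⊤ : ℕ∞) (deriv Γ) := by
    have h1 : ContDiff ℝ (((⊤ : ℕ∞) : WithTop ℕ∞) + 1) Γ := by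
      simpa using hΓ
    exact (contDiff_succ_iff_deriv.mp h1).2.2
  have hΓ'per : Function.Periodic (deriv Γ) L := by
    intro t
    have : (fun s => Γ (s + L)) = Γ := funext fun s => hΓper s
    calc deriv Γ (t + L) = deriv (fun s => Γ (s + L)) t := by
          rw [deriv_comp_add_const]
      _ = deriv Γ t := by rw [this]
  set v : ℝ → EuclideanSpace ℝ (Fin 3) := fun t => crossV (deriv Γ t) (u t) with hv
  have hΓc : ∀ i, ContDiff ℝ (⊤ : ℕ∞) fun t => deriv Γ t i := fun i => contDiff_euclidean.mp hΓ' i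
  have huc : ∀ i, ContDiff ℝ (⊤ : ℕ∞) fun t => u t i := fun i => contDiff_euclidean.mp hu i
  have hvsmooth : ContDiff ℝ (⊤ : ℕ∞) v := by
    apply contDiff_euclidean.mpr
    intro i
    fin_cases i <;>
      simp only [hv, crossV_apply, Matrix.cons_val_zero, Matrix.cons_val_one, Matrix.head_cons,
        Matrix.cons_val_two, Matrix.tail_cons, Fin.isValue] <;>
    · exact ((hΓc _).mul (huc _)).sub ((hΓc _).mul (huc _))
  have hvper : Function.Periodic v L := by
    intro t; simp [hv, hΓ'per t, huper t]
  have hint := hker v hvsmooth hvper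
  have hdet : ∀ t, det3 (deriv Γ t) (u t) (v t) =
      (deriv Γ t 1 * u t 2 - deriv Γ t 2 * u t 1)^2 +
      (deriv Γ t 2 * u t 0 - deriv Γ t 0 * u t 2)^2 +
      (deriv Γ t 0 * u t 1 - deriv Γ t 1 * u t 0)^2 := by
    intro t
    simp only [det3, hv, crossV_apply, Matrix.cons_val_zero, Matrix.cons_val_one, Matrix.head_cons,
      Matrix.cons_val_two, Matrix.tail_cons]
    ring
  set f : ℝ → ℝ := fun t => det3 (deriv Γ t) (u t) (v t) with hf
  have hfc : Continuous f := by
    have : f = fun t =>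
      (deriv Γ t 1 * u t 2 - deriv Γ t 2 * u t 1)^2 +
      (deriv Γ t 2 * u t 0 - deriv Γ t 0 * u t 2)^2 +
      (deriv Γ t 0 * u t 1 - deriv Γ t 1 * u t 0)^2 := funext hdet
    rw [this]
    have c : ∀ i, Continuous fun t => deriv Γ t i := fun i => (hΓc i).continuous
    have c' : ∀ i, Continuous fun t => u t i := fun i => (huc i).continuous
    fun_prop
  have hfnn : ∀ t, 0 ≤ f t := by
    intro t; rw [hf]; simp only; rw [hdet t]; positivity
  have hfper : Function.Periodic f L := by
    intro t; simp only [hf, hv]; rw [hΓ'per t, huper t]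
  have hfzero : ∀ t, f t = 0 :=
    zero_of_periodic_nonneg_integral_zero hfc L hL hfper hfnn hint
  intro t
  have h0 := hfzero t
  rw [hf] at h0; simp only at h0; rw [hdet t] at h0
  set a := deriv Γ t with ha
  set b := u t with hb
  have e1 : a 1 * b 2 - a 2 * b 1 = 0 := by nlinarith [sq_nonneg (a 1 * b 2 - a 2 * b 1), sq_nonneg (a 2 * b 0 - a 0 * b 2), sq_nonneg (a 0 * b 1 - a 1 * b 0)]
  have e2 : a 2 * b 0 - a 0 * b 2 = 0 := by nlinarith [sq_nonneg (a 1 * b 2 - a 2 * b 1), sq_nonneg (a 2 * b 0 - a 0 * b 2), sq_nonneg (a 0 * b 1 - a 1 * b 0)]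
  have e3 : a 0 * b 1 - a 1 * b 0 = 0 := by nlinarith [sq_nonneg (a 1 * b 2 - a 2 * b 1), sq_nonneg (a 2 * b 0 - a 0 * b 2), sq_nonneg (a 0 * b 1 - a 1 * b 0)]
  have key := cross_zero_parallel (a 0) (a 1) (a 2) (b 0) (b 1) (b 2) e1 e2 e3 ?_
  · obtain ⟨c, h0', h1', h2'⟩ := key
    refine ⟨c, ?_⟩
    have hsmul : ∀ (c : ℝ) (x : EuclideanSpace ℝ (Fin 3)) (k : Fin 3), (c • x) k = c * x k :=
      fun c x k => rfl
    ext j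
    rw [hsmul]
    fin_cases j
    · exact h0'
    · exact h1'
    · exact h2'
  · by_contra h
    push_neg at h
    obtain ⟨h0', h1', h2'⟩ := h
    apply hreg t
    rw [← ha]
    ext j
    fin_cases j
    · exact h0'
    · exact h1'
    · exact h2'
end

section
/- Let γ : ℝ → ℝⁿ be a smooth L-periodic curve with |γ'(t)| = 1 for all t, let ℓ > 0, and set Γ₊ = γ + ℓγ' and Γ₋ = γ − ℓγ'. Then for every pair of vectors a, b ∈ ℝⁿ, ∫₀ᴸ [(a·Γ₊(t))(b·Γ₊'(t)) − (b·Γ₊(t))(a·Γ₊'(t))] dt = ∫₀ᴸ [(a·Γ₋(t))(b·Γ₋'(t)) − (b·Γ₋(t))(a·Γ₋'(t))] dt. (The area bivector A(Γ) = ∫ Γ ∧ Γ' dt is preserved by the bicycle correspondence.) -/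
open scoped RealInnerProductSpace

/-- The area bivector `A(Γ) = ∫ Γ ∧ Γ' dt`, encoded by its
evaluations on pairs of vectors `a, b`, is preserved by the bicycle
correspondence. -/
theorem bicycle_preserves_area_bivector {n : ℕ} (L ℓ : ℝ) (hL : 0 < L) (hℓ : 0 < ℓ)
    (γ : ℝ → EuclideanSpace ℝ (Fin n))
    (hγ : ContDiff ℝ (⊤ : ℕ∞) γ) (hγper : Function.Periodic γ L)
    (harc : ∀ t, ‖deriv γ t‖ = 1)
    (Γp Γm : ℝ → EuclideanSpace ℝ (Fin n))
    (hΓp : Γp = fun t => γ t + ℓ • deriv γ t)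
    (hΓm : Γm = fun t => γ t - ℓ • deriv γ t)
    (a b : EuclideanSpace ℝ (Fin n)) :
    ∫ t in (0:ℝ)..L, (⟪a, Γp t⟫ * ⟪b, deriv Γp t⟫ - ⟪b, Γp t⟫ * ⟪a, deriv Γp t⟫)
      = ∫ t in (0:ℝ)..L,
          (⟪a, Γm t⟫ * ⟪b, deriv Γm t⟫ - ⟪b, Γm t⟫ * ⟪a, deriv Γm t⟫) := by
  -- basic smoothness facts
  have hγ' : ContDiff ℝ (⊤ : ℕ∞) γ := hγ.of_le (by simp)
  have hγ1 : ContDiff ℝ (⊤ : ℕ∞) (deriv γ) := (contDiff_infty_iff_deriv.mp hγ').2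
  have hd : Differentiable ℝ γ := hγ'.differentiable (by simp)
  have hd1 : Differentiable ℝ (deriv γ) := hγ1.differentiable (by simp)
  have hc : Continuous γ := hγ.continuous
  have hc1 : Continuous (deriv γ) := hγ1.continuous
  have hc2 : Continuous (deriv (deriv γ)) :=
    ((contDiff_infty_iff_deriv.mp hγ1).2).continuous
  -- derivative of dot products
  have hInner : ∀ (v : EuclideanSpace ℝ (Fin n)) (f : ℝ → EuclideanSpace ℝ (Fin n))
      (t : ℝ), DifferentiableAt ℝ f t →
      HasDerivAt (fun s => ⟪v, f s⟫) ⟪v, deriv f t⟫ t := by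
    intro v f t hf
    simpa using (hasDerivAt_const t v).inner ℝ hf.hasDerivAt
  -- derivatives of Γp and Γm
  have hΓpD : ∀ t, HasDerivAt Γp (deriv γ t + ℓ • deriv (deriv γ) t) t := by
    intro t
    rw [hΓp]
    exact (hd t).hasDerivAt.add (((hd1 t).hasDerivAt).const_smul ℓ)
  have hΓmD : ∀ t, HasDerivAt Γm (deriv γ t - ℓ • deriv (deriv γ) t) t := by
    intro t
    rw [hΓm]
    exact (hd t).hasDerivAt.sub (((hd1 t).hasDerivAt).const_smul ℓ)
  have hdΓp : ∀ t, deriv Γp t = deriv γ t + ℓ • deriv (deriv γ) t := fun t => (hΓpD t).deriv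
  have hdΓm : ∀ t, deriv Γm t = deriv γ t - ℓ • deriv (deriv γ) t := fun t => (hΓmD t).deriv
  -- candidate antiderivative
  set G : ℝ → ℝ := fun t =>
    (2 * ℓ) * (⟪a, γ t⟫ * ⟪b, deriv γ t⟫ - ⟪b, γ t⟫ * ⟪a, deriv γ t⟫) with hG
  set D : ℝ → ℝ := fun t =>
    (2 * ℓ) * ((⟪a, deriv γ t⟫ * ⟪b, deriv γ t⟫ + ⟪a, γ t⟫ * ⟪b, deriv (deriv γ) t⟫)
      - (⟪b, deriv γ t⟫ * ⟪a, deriv γ t⟫ + ⟪b, γ t⟫ * ⟪a, deriv (deriv γ) t⟫)) with hD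
  have hGD : ∀ t, HasDerivAt G (D t) t := by
    intro t
    have hA := hInner a γ t (hd t)
    have hB := hInner b γ t (hd t)
    have hA1 := hInner a (deriv γ) t (hd1 t)
    have hB1 := hInner b (deriv γ) t (hd1 t)
    have := (((hA.mul hB1).sub (hB.mul hA1)).const_mul (2 * ℓ))
    convert this using 1
    all_goals rfl
  -- pointwise identity
  have hpt : ∀ t, (⟪a, Γp t⟫ * ⟪b, deriv Γp t⟫ - ⟪b, Γp t⟫ * ⟪a, deriv Γp t⟫)
      = (⟪a, Γm t⟫ * ⟪b, deriv Γm t⟫ - ⟪b, Γm t⟫ * ⟪a, deriv Γm t⟫) + D t := by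
    intro t
    rw [hdΓp, hdΓm, hΓp, hΓm]
    simp only [inner_add_right, inner_sub_right, real_inner_smul_right, hD]
    ring
  -- integrability of D (continuity)
  have hDc : Continuous D := by
    apply Continuous.mul continuous_const
    apply Continuous.sub <;> apply Continuous.add <;> apply Continuous.mul <;>
      exact (continuous_const.inner (by assumption))
  -- integral of D over a period is zero
  have hGper : G L = G 0 := by
    have h1 : γ L = γ 0 := by simpa using hγper 0
    have h2 : deriv γ L = deriv γ 0 := by
      have hfun : (fun x => γ (x + L)) = γ := funext hγper
      have h3 := deriv_comp_add_const (f := γ) (a := L) (x := (0:ℝ))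
      rw [hfun] at h3
      simpa using h3.symm
    simp [hG, h1, h2]
  have hDint : ∫ t in (0:ℝ)..L, D t = 0 := by
    rw [intervalIntegral.integral_eq_sub_of_hasDerivAt (fun t _ => hGD t)
      (hDc.intervalIntegrable 0 L), hGper, sub_self]
  -- integrability of the Γm integrand
  have hΓmc : Continuous (fun t => ⟪a, Γm t⟫ * ⟪b, deriv Γm t⟫ - ⟪b, Γm t⟫ * ⟪a, deriv Γm t⟫) := by
    have hcm : Continuous Γm := by rw [hΓm]; exact hc.sub (hc1.const_smul ℓ)
    have hcm' : Continuous (deriv Γm) := by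
      have : deriv Γm = fun t => deriv γ t - ℓ • deriv (deriv γ) t := funext hdΓm
      rw [this]; exact hc1.sub (hc2.const_smul ℓ)
    apply Continuous.sub <;> apply Continuous.mul <;>
      first
        | exact continuous_const.inner hcm
        | exact continuous_const.inner hcm'
  calc ∫ t in (0:ℝ)..L, (⟪a, Γp t⟫ * ⟪b, deriv Γp t⟫ - ⟪b, Γp t⟫ * ⟪a, deriv Γp t⟫)
      = ∫ t in (0:ℝ)..L, ((⟪a, Γm t⟫ * ⟪b, deriv Γm t⟫ - ⟪b, Γm t⟫ * ⟪a, deriv Γm t⟫) + D t) := by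
        simp only [hpt]
    _ = (∫ t in (0:ℝ)..L, (⟪a, Γm t⟫ * ⟪b, deriv Γm t⟫ - ⟪b, Γm t⟫ * ⟪a, deriv Γm t⟫))
          + ∫ t in (0:ℝ)..L, D t := by
        exact intervalIntegral.integral_add (hΓmc.intervalIntegrable 0 L)
          (hDc.intervalIntegrable 0 L)
    _ = _ := by rw [hDint, add_zero]
end

section
/- Let γ : ℝ → ℝ² be a smooth L-periodic curve with |γ'(t)| = 1 for all t, let ℓ > 0, and set Γ₊ = γ + ℓγ' and Γ₋ = γ − ℓγ'. Then ∫₀ᴸ det(Γ₊(t), Γ₊'(t)) dt = ∫₀ᴸ det(Γ₋(t), Γ₋'(t)) dt, i.e. the two front tracks enclose equal signed areas. (The planar bicycle correspondence preserves the enclosed area.) -/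
/-- Determinant of two vectors of `ℝ²` (as columns). -/
noncomputable def det2 (x y : EuclideanSpace ℝ (Fin 2)) : ℝ :=
  x 0 * y 1 - x 1 * y 0

/-- The planar bicycle correspondence preserves the enclosed signed
area: `∫ det(Γ₊, Γ₊') dt = ∫ det(Γ₋, Γ₋') dt`. -/
theorem bicycle_preserves_area (L ℓ : ℝ) (hL : 0 < L) (hℓ : 0 < ℓ)
    (γ : ℝ → EuclideanSpace ℝ (Fin 2))
    (hγ : ContDiff ℝ (⊤ : ℕ∞) γ) (hγper : Function.Periodic γ L)
    (harc : ∀ t, ‖deriv γ t‖ = 1)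
    (Γp Γm : ℝ → EuclideanSpace ℝ (Fin 2))
    (hΓp : Γp = fun t => γ t + ℓ • deriv γ t)
    (hΓm : Γm = fun t => γ t - ℓ • deriv γ t) :
    ∫ t in (0:ℝ)..L, det2 (Γp t) (deriv Γp t)
      = ∫ t in (0:ℝ)..L, det2 (Γm t) (deriv Γm t) := by
  subst hΓp hΓm
  have hγtop : ContDiff ℝ (⊤ : ℕ∞) γ := hγ.of_le (by simp)
  obtain ⟨hγdiff, hγ'⟩ := contDiff_infty_iff_deriv.mp hγtop
  obtain ⟨hγ'diff, hγ''⟩ := contDiff_infty_iff_deriv.mp hγ'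
  set g := deriv γ with hg
  set g' := deriv (deriv γ) with hg'
  have hγd : ∀ t, HasDerivAt γ (g t) t := fun t => (hγdiff t).hasDerivAt
  have hgd : ∀ t, HasDerivAt g (g' t) t := fun t => (hγ'diff t).hasDerivAt
  have hPd : ∀ t, HasDerivAt (fun t => γ t + ℓ • g t) (g t + ℓ • g' t) t :=
    fun t => (hγd t).add ((hgd t).const_smul ℓ)
  have hMd : ∀ t, HasDerivAt (fun t => γ t - ℓ • g t) (g t - ℓ • g' t) t :=
    fun t => (hγd t).sub ((hgd t).const_smul ℓ)
  have hP : ∀ t, deriv (fun t => γ t + ℓ • g t) t = g t + ℓ • g' t :=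
    fun t => (hPd t).deriv
  have hM : ∀ t, deriv (fun t => γ t - ℓ • g t) t = g t - ℓ • g' t :=
    fun t => (hMd t).deriv
  -- coordinate functions and their derivatives
  have hcoord : ∀ (i : Fin 2) (f f' : ℝ → EuclideanSpace ℝ (Fin 2)),
      (∀ t, HasDerivAt f (f' t) t) → ∀ t, HasDerivAt (fun t => f t i) (f' t i) t := by
    intro i f f' hf t
    exact ((EuclideanSpace.proj i).hasFDerivAt.comp_hasDerivAt t (hf t))
  -- f t = det2 (γ t) (g t), derivative is det2 (γ t) (g' t)
  have hfd : ∀ t, HasDerivAt (fun t => det2 (γ t) (g t)) (det2 (γ t) (g' t)) t := by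
    intro t
    have h0 := hcoord 0 γ g hγd t
    have h1 := hcoord 1 γ g hγd t
    have h0' := hcoord 0 g g' hgd t
    have h1' := hcoord 1 g g' hgd t
    have := ((h0.mul h1').sub (h1.mul h0'))
    have heq : g t 0 * g t 1 + γ t 0 * g' t 1 - (g t 1 * g t 0 + γ t 1 * g' t 0)
        = det2 (γ t) (g' t) := by simp [det2]; ring
    exact this.congr_deriv heq
  -- continuity of everything in sight
  have hcγ : Continuous γ := hγ.continuous
  have hcg : Continuous g := hγ'.continuous
  have hcg' : Continuous g' := hγ''.continuous
  have hcoordc : ∀ (i : Fin 2) (f : ℝ → EuclideanSpace ℝ (Fin 2)),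
      Continuous f → Continuous (fun t => f t i) := by
    intro i f hf
    exact (EuclideanSpace.proj i).continuous.comp hf
  have hcdet : ∀ (f h : ℝ → EuclideanSpace ℝ (Fin 2)), Continuous f → Continuous h →
      Continuous (fun t => det2 (f t) (h t)) := by
    intro f h hf hh
    exact ((hcoordc 0 f hf).mul (hcoordc 1 h hh)).sub
      ((hcoordc 1 f hf).mul (hcoordc 0 h hh))
  -- integral of the derivative over a period vanishes
  have hint : ∫ t in (0:ℝ)..L, det2 (γ t) (g' t) = 0 := by
    have := intervalIntegral.integral_eq_sub_of_hasDerivAt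
      (f := fun t => det2 (γ t) (g t)) (f' := fun t => det2 (γ t) (g' t))
      (fun t _ => hfd t)
      ((hcdet γ g' hcγ hcg').intervalIntegrable 0 L)
    rw [this]
    have hgper : ∀ x, g (x + L) = g x := by
      intro x
      have : (fun y => γ (y + L)) = γ := funext fun y => hγper y
      calc g (x + L) = deriv (fun y => γ (y + L)) x := (deriv_comp_add_const γ L x).symm
        _ = deriv γ x := by rw [this]
    have h1 : γ L = γ 0 := by simpa using hγper 0
    have h2 : g L = g 0 := by simpa using hgper 0
    show det2 (γ L) (g L) - det2 (γ 0) (g 0) = 0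
    rw [h1, h2, sub_self]
  -- pointwise algebra: integrand difference
  have hptP : ∀ t, det2 (γ t + ℓ • g t) (deriv (fun t => γ t + ℓ • g t) t)
      = det2 (γ t) (g t) + ℓ * det2 (γ t) (g' t) + ℓ^2 * det2 (g t) (g' t) := by
    intro t
    rw [hP t]
    simp only [det2, PiLp.add_apply, PiLp.smul_apply, smul_eq_mul]
    ring
  have hptM : ∀ t, det2 (γ t - ℓ • g t) (deriv (fun t => γ t - ℓ • g t) t)
      = det2 (γ t) (g t) - ℓ * det2 (γ t) (g' t) + ℓ^2 * det2 (g t) (g' t) := by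
    intro t
    rw [hM t]
    simp only [det2, PiLp.sub_apply, PiLp.smul_apply, smul_eq_mul]
    ring
  calc ∫ t in (0:ℝ)..L, det2 (γ t + ℓ • g t) (deriv (fun t => γ t + ℓ • g t) t)
      = ∫ t in (0:ℝ)..L, (det2 (γ t) (g t) + ℓ * det2 (γ t) (g' t)
          + ℓ^2 * det2 (g t) (g' t)) := by
        exact intervalIntegral.integral_congr fun t _ => hptP t
    _ = (∫ t in (0:ℝ)..L, (det2 (γ t) (g t) + ℓ^2 * det2 (g t) (g' t)))
          + ℓ * ∫ t in (0:ℝ)..L, det2 (γ t) (g' t) := by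
        rw [← intervalIntegral.integral_const_mul, ← intervalIntegral.integral_add]
        · exact intervalIntegral.integral_congr fun t _ => by ring
        · exact ((hcdet γ g hcγ hcg).add
            ((continuous_const.mul (hcdet g g' hcg hcg')))).intervalIntegrable 0 L
        · exact (continuous_const.mul (hcdet γ g' hcγ hcg')).intervalIntegrable 0 L
    _ = (∫ t in (0:ℝ)..L, (det2 (γ t) (g t) + ℓ^2 * det2 (g t) (g' t)))
          - ℓ * ∫ t in (0:ℝ)..L, det2 (γ t) (g' t) := by rw [hint]; ring
    _ = ∫ t in (0:ℝ)..L, (det2 (γ t) (g t) - ℓ * det2 (γ t) (g' t)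
          + ℓ^2 * det2 (g t) (g' t)) := by
        rw [← intervalIntegral.integral_const_mul, ← intervalIntegral.integral_sub]
        · exact (intervalIntegral.integral_congr fun t _ => by ring).symm
        · exact ((hcdet γ g hcγ hcg).add
            ((continuous_const.mul (hcdet g g' hcg hcg')))).intervalIntegrable 0 L
        · exact (continuous_const.mul (hcdet γ g' hcγ hcg')).intervalIntegrable 0 L
    _ = ∫ t in (0:ℝ)..L, det2 (γ t - ℓ • g t) (deriv (fun t => γ t - ℓ • g t) t) := by
        exact (intervalIntegral.integral_congr fun t _ => hptM t).symm
end

section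
/- Let γ : ℝ → ℝⁿ be a smooth L-periodic curve with |γ'(t)| = 1 for all t, let ℓ > 0, and set Γ₊ = γ + ℓγ' and Γ₋ = γ − ℓγ'. Then the vector-valued integrals satisfy ∫₀ᴸ (Γ₊(t)·Γ₊'(t)) Γ₊(t) dt = ∫₀ᴸ (Γ₋(t)·Γ₋'(t)) Γ₋(t) dt. (The centroid vector J(Γ) = ∫ (Γ·Γ')Γ dt is preserved by the bicycle correspondence.) -/
open scoped RealInnerProductSpace

/-- The centroid vector `J(Γ) = ∫ (Γ·Γ')Γ dt` is preserved by the
bicycle correspondence. -/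
theorem bicycle_preserves_centroid {n : ℕ} (L ℓ : ℝ) (hL : 0 < L) (hℓ : 0 < ℓ)
    (γ : ℝ → EuclideanSpace ℝ (Fin n))
    (hγ : ContDiff ℝ (⊤ : ℕ∞) γ) (hγper : Function.Periodic γ L)
    (harc : ∀ t, ‖deriv γ t‖ = 1)
    (Γp Γm : ℝ → EuclideanSpace ℝ (Fin n))
    (hΓp : Γp = fun t => γ t + ℓ • deriv γ t)
    (hΓm : Γm = fun t => γ t - ℓ • deriv γ t) :
    ∫ t in (0:ℝ)..L, ⟪Γp t, deriv Γp t⟫ • Γp t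
      = ∫ t in (0:ℝ)..L, ⟪Γm t, deriv Γm t⟫ • Γm t := by
  subst hΓp hΓm
  set g : ℝ → EuclideanSpace ℝ (Fin n) := deriv γ with hg_def
  have hγ' : ContDiff ℝ (⊤ : ℕ∞) γ := hγ.of_le (by simp)
  have hγ1 : ContDiff ℝ (⊤ : ℕ∞) g := (contDiff_infty_iff_deriv.mp hγ').2
  have hγ2 : ContDiff ℝ (⊤ : ℕ∞) (deriv g) := (contDiff_infty_iff_deriv.mp hγ1).2
  set g2 : ℝ → EuclideanSpace ℝ (Fin n) := deriv g with hg2_def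
  have hγd : ∀ t, HasDerivAt γ (g t) t := fun t =>
    (hγ'.differentiable (by simp) t).hasDerivAt
  have hgd : ∀ t, HasDerivAt g (g2 t) t := fun t =>
    (hγ1.differentiable (by simp) t).hasDerivAt
  have hunit : ∀ t, ⟪g t, g t⟫ = 1 := by
    intro t
    rw [real_inner_self_eq_norm_sq, harc t]
    norm_num
  have hperp : ∀ t, ⟪g t, g2 t⟫ = 0 := by
    intro t
    have h1 : HasDerivAt (fun s => ⟪g s, g s⟫) (⟪g t, g2 t⟫ + ⟪g2 t, g t⟫) t :=
      (hgd t).inner ℝ (hgd t)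
    have h2 : HasDerivAt (fun s => ⟪g s, g s⟫) 0 t := by
      have he : (fun s => ⟪g s, g s⟫) = fun _ => (1:ℝ) := funext fun s => hunit s
      rw [he]; exact hasDerivAt_const t 1
    have h3 := h1.unique h2
    have h4 := real_inner_comm (g2 t) (g t)
    linarith
  have hΓpd : ∀ t, HasDerivAt (fun s => γ s + ℓ • g s) (g t + ℓ • g2 t) t :=
    fun t => (hγd t).add ((hgd t).const_smul ℓ)
  have hΓmd : ∀ t, HasDerivAt (fun s => γ s - ℓ • g s) (g t - ℓ • g2 t) t :=
    fun t => (hγd t).sub ((hgd t).const_smul ℓ)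
  have hdp : ∀ t, deriv (fun s => γ s + ℓ • g s) t = g t + ℓ • g2 t :=
    fun t => (hΓpd t).deriv
  have hdm : ∀ t, deriv (fun s => γ s - ℓ • g s) t = g t - ℓ • g2 t :=
    fun t => (hΓmd t).deriv
  set D : ℝ → EuclideanSpace ℝ (Fin n) :=
    fun t => ⟪γ t, g t⟫ • g t + (⟪γ t, g2 t⟫ + ⟪g t, g t⟫) • γ t with hD_def
  have hF : ∀ t, HasDerivAt (fun s => ⟪γ s, g s⟫ • γ s) (D t) t := fun t =>
    ((hγd t).inner ℝ (hgd t)).smul (hγd t)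
  have key : ∀ t, ⟪γ t + ℓ • g t, g t + ℓ • g2 t⟫ • (γ t + ℓ • g t)
      = ⟪γ t - ℓ • g t, g t - ℓ • g2 t⟫ • (γ t - ℓ • g t) + (2 * ℓ) • D t := by
    intro t
    have e1 : ⟪γ t + ℓ • g t, g t + ℓ • g2 t⟫ = ⟪γ t, g t⟫ + ℓ * ⟪γ t, g2 t⟫ + ℓ := by
      simp only [inner_add_left, inner_add_right, real_inner_smul_left, real_inner_smul_right,
        hperp t, hunit t]
      ring
    have e2 : ⟪γ t - ℓ • g t, g t - ℓ • g2 t⟫ = ⟪γ t, g t⟫ - ℓ * ⟪γ t, g2 t⟫ - ℓ := by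
      simp only [inner_sub_left, inner_sub_right, real_inner_smul_left, real_inner_smul_right,
        hperp t, hunit t]
      ring
    have hDt : D t = ⟪γ t, g t⟫ • g t + (⟪γ t, g2 t⟫ + ⟪g t, g t⟫) • γ t := rfl
    rw [e1, e2, hDt, hunit t]
    module
  have hcont_fm : Continuous fun t => ⟪γ t - ℓ • g t, g t - ℓ • g2 t⟫ • (γ t - ℓ • g t) := by
    have c1 : Continuous fun t => γ t - ℓ • g t :=
      hγ.continuous.sub (hγ1.continuous.const_smul ℓ)
    have c2 : Continuous fun t => g t - ℓ • g2 t :=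
      hγ1.continuous.sub (hγ2.continuous.const_smul ℓ)
    exact (c1.inner (𝕜 := ℝ) c2).smul c1
  have hcontD : Continuous D := by
    rw [hD_def]
    exact ((hγ.continuous.inner (𝕜 := ℝ) hγ1.continuous).smul hγ1.continuous).add
      (((hγ.continuous.inner (𝕜 := ℝ) hγ2.continuous).add
        (hγ1.continuous.inner (𝕜 := ℝ) hγ1.continuous)).smul hγ.continuous)
  have hintD : IntervalIntegrable D MeasureTheory.volume 0 L :=
    hcontD.intervalIntegrable 0 L
  have hFD : ∫ t in (0:ℝ)..L, D t = ⟪γ L, g L⟫ • γ L - ⟪γ 0, g 0⟫ • γ 0 :=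
    intervalIntegral.integral_eq_sub_of_hasDerivAt (fun t _ => hF t) hintD
  have hper0 : (⟪γ L, g L⟫ • γ L : EuclideanSpace ℝ (Fin n)) = ⟪γ 0, g 0⟫ • γ 0 := by
    have h1 : γ L = γ 0 := by simpa using hγper 0
    have h2 : g L = g 0 := by
      have he : (fun s => γ (s + L)) = γ := funext fun s => hγper s
      have := deriv_comp_add_const (f := γ) (a := L) (x := (0:ℝ))
      rw [he] at this
      simpa [hg_def] using this.symm
    rw [h1, h2]
  simp only [hdp, hdm]
  rw [show (fun t => ⟪γ t + ℓ • g t, g t + ℓ • g2 t⟫ • (γ t + ℓ • g t))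
      = fun t => ⟪γ t - ℓ • g t, g t - ℓ • g2 t⟫ • (γ t - ℓ • g t) + (2 * ℓ) • D t
    from funext key]
  rw [intervalIntegral.integral_add (g := fun t => (2 * ℓ) • D t) (hcont_fm.intervalIntegrable 0 L)
    ((hcontD.const_smul (2 * ℓ) : Continuous fun t => (2 * ℓ) • D t).intervalIntegrable 0 L)]
  rw [intervalIntegral.integral_smul, hFD, hper0]
  simp
end
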